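/- arXiv:1807.06578 — 4 statements merged into one kernel-verified Lean document; each statement's English description precedes it below -/
import Mathlib

section
/- Let M be a matroid on a finite set E. The boolean intervals [B \ Int(B), B ∪ Ext(B)], taken over all bases B of M, form a partition of the power set 2^E: every subset A ⊆ E satisfies B \ Int(B) ⊆ A ⊆ B ∪ Ext(B) for exactly one basis B of M. -/
namespace AB
open Set

variable {α : Type*}

/-- A circuit of a matroid: a minimal dependent set. -/
def Circuit (M : Matroid α) (C : Set α) : Prop :=
  M.Dep C ∧ ∀ D, D ⊂ C → M.Indep D

/-- A cocircuit: a circuit of the dual matroid. -/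
def Cocircuit (M : Matroid α) (C : Set α) : Prop := Circuit M✶ C

/-- `b` is internally active for the basis `B`: `b ∈ B` and `b` is the minimum of the
fundamental cocircuit `C*(B;b)`, the unique cocircuit contained in `(M.E \ B) ∪ {b}`. -/
def IntActive [LinearOrder α] (M : Matroid α) (B : Set α) (b : α) : Prop :=
  b ∈ B ∧ ∃ C, Cocircuit M C ∧ C ⊆ (M.E \ B) ∪ {b} ∧ b ∈ C ∧ ∀ x ∈ C, b ≤ x

/-- `e` is externally active for the basis `B`: `e ∈ M.E \ B` and `e` is the minimum of the
fundamental circuit `C(B;e)`, the unique circuit contained in `B ∪ {e}`. -/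
def ExtActive [LinearOrder α] (M : Matroid α) (B : Set α) (e : α) : Prop :=
  e ∈ M.E \ B ∧ ∃ C, Circuit M C ∧ C ⊆ B ∪ {e} ∧ e ∈ C ∧ ∀ x ∈ C, e ≤ x

/-- `Int(B)`, the set of internally active elements of `B`. -/
def IntSet [LinearOrder α] (M : Matroid α) (B : Set α) : Set α := {b | IntActive M B b}

/-- `Ext(B)`, the set of externally active elements of `B`. -/
def ExtSet [LinearOrder α] (M : Matroid α) (B : Set α) : Set α := {e | ExtActive M B e}

end AB

/-!
Order `E` by putting the elements of `A` first, in decreasing order, and then the others, in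
increasing order. For a base `B`, the condition `B \ Int(B) ⊆ A ⊆ B ∪ Ext(B)` says exactly that
every `e ∉ B` is the largest element of its fundamental circuit `C(B;e)` in this order, which is
the exchange criterion for `B` to be a base of minimum weight. A minimum-weight base exists, and
it is unique because the order is strict: if `B ≠ B'` and `e` is the least element of `B Δ B'`,
say `e ∈ B' \ B`, then `C(B;e) ⊄ B'` yields a smaller element of `B \ B'`.
-/

open Set

namespace Matroid

variable {α β : Type*} [LinearOrder β] {M : Matroid α} {f : α → β} {B B' : Set α} {c e x y : α}

lemma IsBase.isBase_insert_sdiff_of_mem_fundCircuit (hB : M.IsBase B) (he : e ∈ M.E \ B)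
    (hc : c ∈ M.fundCircuit e B) (hce : c ≠ e) : M.IsBase (insert e B \ {c}) := by
  have hcB : c ∈ B := ((M.fundCircuit_subset_insert e B) hc).resolve_left hce
  refine hB.exchange_isBase_of_indep' hcB he.2 ?_
  rwa [← hB.indep.mem_fundCircuit_iff (by rw [hB.closure_eq]; exact he.1) he.2]

lemma mem_ground_sdiff_of_mem_fundCircuit (hc : c ∈ M.fundCircuit e B) (hce : c ≠ e) :
    e ∈ M.E \ B := by
  by_contra h
  rw [mem_sdiff, not_and_or, not_not] at h
  rcases h with h | h
  · exact hce (by rwa [fundCircuit_eq_of_notMem_ground h] at hc)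
  · exact hce (by rwa [fundCircuit_eq_of_mem h] at hc)

/-- The exchange criterion for `B` to be a base of minimum `f`-weight. -/
structure IsMinBase (M : Matroid α) (f : α → β) (B : Set α) : Prop where
  isBase : M.IsBase B
  le_of_mem_fundCircuit : ∀ e ∈ M.E \ B, ∀ c ∈ M.fundCircuit e B, f c ≤ f e

/-- Ranks `f` in `ℕ`, so that the `f`-weights of bases can be added. -/
noncomputable def countBelow (M : Matroid α) (f : α → β) (x : α) : ℕ :=
  {z ∈ M.E | f z < f x}.ncard

lemma countBelow_lt_countBelow [M.Finite] (hx : x ∈ M.E) (hxy : f x < f y) :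
    M.countBelow f x < M.countBelow f y :=
  ncard_lt_ncard ⟨fun _ hz ↦ ⟨hz.1, hz.2.trans hxy⟩, fun h ↦ (h ⟨hx, hxy⟩).2.false⟩
    (M.ground_finite.subset (sep_subset _ _))

lemma exists_isMinBase [M.Finite] (f : α → β) : ∃ B, M.IsMinBase f B := by
  let weight (B : Set α) : ℕ := ∑ᶠ x ∈ B, M.countBelow f x
  obtain ⟨B, hB, hmin⟩ := exists_minimalFor_of_wellFoundedLT M.IsBase weight M.exists_isBase
  refine ⟨B, hB, fun e he c hc ↦ le_of_not_gt fun hec ↦ ?_⟩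
  have hce : c ≠ e := fun h ↦ (h ▸ hec).false
  have hc_insert : c ∈ insert e B := M.fundCircuit_subset_insert e B hc
  have hexch : weight (insert e B \ {c}) + M.countBelow f c = M.countBelow f e + weight B := by
    have hfin := M.ground_finite.subset hB.subset_ground
    have hc' : c ∉ insert e B \ {c} := fun h ↦ h.2 rfl
    simp only [weight]
    rw [add_comm, ← finsum_mem_insert _ hc' (hfin.insert e).sdiff,
      insert_sdiff_singleton, insert_eq_of_mem hc_insert, finsum_mem_insert _ he.2 hfin]
  have hlt := countBelow_lt_countBelow he.1 hec
  have hle := hmin (hB.isBase_insert_sdiff_of_mem_fundCircuit he hc hce) (by omega)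
  omega

lemma IsMinBase.exists_lt_of_mem_sdiff (hB : M.IsMinBase f B) (hf : InjOn f M.E)
    (hB' : M.IsBase B') (he : e ∈ B' \ B) : ∃ c ∈ B \ B', f c < f e := by
  have heE : e ∈ M.E := hB'.subset_ground he.1
  have hC := hB.isBase.fundCircuit_isCircuit heE he.2
  obtain ⟨c, hcC, hcB'⟩ := not_subset.1 fun h ↦ hC.not_indep (hB'.indep.subset h)
  have hce : c ≠ e := fun h ↦ hcB' (h ▸ he.1)
  have hcB : c ∈ B := ((M.fundCircuit_subset_insert e B) hcC).resolve_left hce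
  refine ⟨c, ⟨hcB, hcB'⟩, (hB.le_of_mem_fundCircuit e ⟨heE, he.2⟩ c hcC).lt_of_ne ?_⟩
  exact fun h ↦ hce (hf (hB.isBase.subset_ground hcB) heE h)

lemma IsMinBase.eq [M.Finite] (hf : InjOn f M.E) (hB : M.IsMinBase f B)
    (hB' : M.IsMinBase f B') : B = B' := by
  by_contra hne
  have hfin : (B \ B' ∪ B' \ B).Finite :=
    (M.ground_finite.subset (sdiff_subset.trans hB.isBase.subset_ground)).union
      (M.ground_finite.subset (sdiff_subset.trans hB'.isBase.subset_ground))
  have hne' : (B \ B' ∪ B' \ B).Nonempty := by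
    rw [nonempty_iff_ne_empty, Ne, union_empty_iff, sdiff_eq_empty, sdiff_eq_empty]
    exact fun h ↦ hne (h.1.antisymm h.2)
  obtain ⟨e, he, hmin⟩ := exists_min_image _ f hfin hne'
  rcases he with he | he
  · obtain ⟨c, hc, hlt⟩ := hB'.exists_lt_of_mem_sdiff hf hB.isBase he
    exact (hmin c (.inr hc)).not_gt hlt
  · obtain ⟨c, hc, hlt⟩ := hB.exists_lt_of_mem_sdiff hf hB'.isBase he
    exact (hmin c (.inl hc)).not_gt hlt

end Matroid

namespace AB

variable {α : Type*} {M : Matroid α} {A B C : Set α} {b e x y : α}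

lemma circuit_iff_isCircuit : Circuit M C ↔ M.IsCircuit C := by
  rw [Matroid.isCircuit_iff_forall_ssubset]
  rfl

lemma cocircuit_iff_isCocircuit : Cocircuit M C ↔ M.IsCocircuit C :=
  circuit_iff_isCircuit

open scoped Classical in
noncomputable def activityKey (A : Set α) (x : α) : αᵒᵈ ⊕ₗ α :=
  if x ∈ A then toLex (.inl (OrderDual.toDual x)) else toLex (.inr x)

lemma activityKey_injective (A : Set α) : Function.Injective (activityKey A) := by
  intro x y h
  unfold activityKey at h
  split_ifs at h <;> simp_all

section LinearOrder

variable [LinearOrder α]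

lemma extActive_iff (hB : M.IsBase B) :
    ExtActive M B e ↔ e ∈ M.E \ B ∧ ∀ x ∈ M.fundCircuit e B, e ≤ x := by
  refine ⟨fun ⟨he, C, hC, hCB, _, hmin⟩ ↦ ⟨he, ?_⟩, fun ⟨he, hmin⟩ ↦ ⟨he, ?_⟩⟩
  · rw [union_singleton] at hCB
    obtain rfl := (circuit_iff_isCircuit.1 hC).eq_fundCircuit_of_subset hB.indep hCB
    exact hmin
  · refine ⟨_, circuit_iff_isCircuit.2 (hB.fundCircuit_isCircuit he.1 he.2), ?_,
      M.mem_fundCircuit e B, hmin⟩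
    rw [union_singleton]
    exact M.fundCircuit_subset_insert e B

lemma intActive_iff (hB : M.IsBase B) :
    IntActive M B b ↔ b ∈ B ∧ ∀ e, b ∈ M.fundCircuit e B → b ≤ e := by
  simp_rw [← hB.mem_fundCocircuit_iff_mem_fundCircuit]
  refine ⟨fun ⟨hb, K, hK, hKB, _, hmin⟩ ↦ ⟨hb, ?_⟩, fun ⟨hb, hmin⟩ ↦ ⟨hb, ?_⟩⟩
  · rw [union_singleton] at hKB
    obtain rfl : K = M.fundCocircuit b B :=
      (cocircuit_iff_isCocircuit.1 hK).eq_fundCircuit_of_subset hB.compl_isBase_dual.indep hKB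
    exact hmin
  · refine ⟨_, cocircuit_iff_isCocircuit.2 (M.fundCocircuit_isCocircuit hb hB), ?_,
      M.mem_fundCocircuit b B, hmin⟩
    rw [union_singleton]
    exact M.fundCocircuit_subset_insert_compl b B

lemma activityKey_le_iff_of_mem (hx : x ∈ A) (hy : y ∈ A) :
    activityKey A x ≤ activityKey A y ↔ y ≤ x := by
  simp [activityKey, hx, hy]

lemma activityKey_le_iff_of_notMem (hx : x ∉ A) (hy : y ∉ A) :
    activityKey A x ≤ activityKey A y ↔ x ≤ y := by
  simp [activityKey, hx, hy]

lemma activityKey_lt_of_mem_of_notMem (hx : x ∈ A) (hy : y ∉ A) :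
    activityKey A x < activityKey A y := by
  simp [activityKey, hx, hy]

lemma isMinBase_activityKey_iff (hA : A ⊆ M.E) (hB : M.IsBase B) :
    M.IsMinBase (activityKey A) B ↔ B \ IntSet M B ⊆ A ∧ A ⊆ B ∪ ExtSet M B := by
  refine ⟨fun hmin ↦ ⟨?_, ?_⟩, fun ⟨hInt, hExt⟩ ↦ ⟨hB, fun e he c hc ↦ ?_⟩⟩
  · rintro b ⟨hbB, hbInt⟩
    by_contra hbA
    refine hbInt ((intActive_iff hB).2 ⟨hbB, fun e hb ↦ ?_⟩)
    obtain rfl | hbe := eq_or_ne b e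
    · exact le_rfl
    have hle := hmin.le_of_mem_fundCircuit e (M.mem_ground_sdiff_of_mem_fundCircuit hb hbe) b hb
    by_cases heA : e ∈ A
    · exact absurd hle (activityKey_lt_of_mem_of_notMem heA hbA).not_ge
    · exact (activityKey_le_iff_of_notMem hbA heA).1 hle
  · intro a ha
    refine (em (a ∈ B)).imp id fun haB ↦ (extActive_iff hB).2 ⟨⟨hA ha, haB⟩, fun x hx ↦ ?_⟩
    have hle := hmin.le_of_mem_fundCircuit a ⟨hA ha, haB⟩ x hx
    by_cases hxA : x ∈ A
    · exact (activityKey_le_iff_of_mem hxA ha).1 hle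
    · exact absurd hle (activityKey_lt_of_mem_of_notMem ha hxA).not_ge
  obtain rfl | hce := eq_or_ne c e
  · exact le_rfl
  have hcB : c ∈ B := ((M.fundCircuit_subset_insert e B) hc).resolve_left hce
  have he_le (heA : e ∈ A) : e ≤ c :=
    ((extActive_iff hB).1 ((hExt heA).resolve_left he.2)).2 c hc
  by_cases hcA : c ∈ A
  · by_cases heA : e ∈ A
    · exact (activityKey_le_iff_of_mem hcA heA).2 (he_le heA)
    · exact (activityKey_lt_of_mem_of_notMem hcA heA).le
  · have hc_le : c ≤ e :=
      ((intActive_iff hB).1 (by_contra fun h ↦ hcA (hInt ⟨hcB, h⟩))).2 e hc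
    by_cases heA : e ∈ A
    · exact absurd (hc_le.antisymm (he_le heA)) hce
    · exact (activityKey_le_iff_of_notMem hcA heA).2 hc_le

end LinearOrder

end AB

/-- The boolean intervals `[B \ Int(B), B ∪ Ext(B)]` over bases `B`
partition the power set of the ground set: every `A ⊆ E` lies in exactly one of them. -/
theorem stmt_5 {α : Type*} [LinearOrder α] (M : Matroid α) [M.Finite]
    (A : Set α) (hA : A ⊆ M.E) :
    ∃! B : Set α, M.IsBase B ∧ B \ AB.IntSet M B ⊆ A ∧ A ⊆ B ∪ AB.ExtSet M B := by
  obtain ⟨B, hB⟩ := M.exists_isMinBase (AB.activityKey A)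
  refine ⟨B, ⟨hB.isBase, (AB.isMinBase_activityKey_iff hA hB.isBase).1 hB⟩, ?_⟩
  rintro B' ⟨hB', hB'A⟩
  exact ((AB.isMinBase_activityKey_iff hA hB').2 hB'A).eq (AB.activityKey_injective A).injOn hB
end

section
/- Let M be a matroid on a finite linearly ordered set E. Then in the polynomial ring ℤ[x,u,y,v], t(M; x+u, y+v) = Σ_{A ⊆ E} x^{|Int_M(A)|} u^{|P_M(A)|} y^{|Ext_M(A)|} v^{|Q_M(A)|}, where for each A ⊆ E, B is the unique basis with B \ Int(B) ⊆ A ⊆ B ∪ Ext(B), and Int_M(A) = Int(B) ∩ A, P_M(A) = Int(B) \ A, Ext_M(A) = Ext(B) \ A, Q_M(A) = Ext(B) ∩ A. -/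
attribute [local instance] Classical.propDecidable

/-!
Every `A ⊆ E` lies in the interval `[B \ Int(B), B ∪ Ext(B)]` of exactly one basis `B`. If it
lay in the intervals of two bases `B₁ ≠ B₂`, let `e` be the largest element of `B₁ ∆ B₂`, say
`e ∈ B₁ \ B₂`. If `e ∈ A` then `e` is externally active for `B₂`, and its fundamental circuit,
not contained in `B₁`, has an element of `B₂ \ B₁` above `e`; if `e ∉ A` then `e` is internally
active for `B₁`, and its fundamental cocircuit, not contained in `E \ B₂`, again has an element
of `B₂ \ B₁` above `e`. So the sum over all `A` splits into sums over the intervals, and on the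
interval of `B` each element of `Int(B)` contributes `x` or `u` and each element of `Ext(B)`
contributes `v` or `y` according as it lies in `A` or not, which gives
`(x + u) ^ |Int(B)| * (y + v) ^ |Ext(B)|`.
-/

namespace AB
open Set

variable {α : Type*} [LinearOrder α] {M : Matroid α} {A B B₁ B₂ I S : Set α} {e : α}

lemma intSet_subset (M : Matroid α) (B : Set α) : IntSet M B ⊆ B := fun _ h => h.1

lemma disjoint_extSet (M : Matroid α) (B : Set α) : Disjoint B (ExtSet M B) :=
  disjoint_left.2 fun _ hB h => h.1.2 hB

lemma ExtActive.exists_gt_of_indep (he : ExtActive M B e) (hI : M.Indep I) (heI : e ∈ I) :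
    ∃ x ∈ B \ I, e < x := by
  obtain ⟨-, C, hC, hCB, -, hmin⟩ := he
  obtain ⟨x, hxC, hxI⟩ := not_subset.1 fun hCI => hC.1.not_indep (hI.subset hCI)
  have hxe : x ≠ e := fun h => hxI (h ▸ heI)
  exact ⟨x, ⟨(hCB hxC).resolve_right hxe, hxI⟩, (hmin x hxC).lt_of_ne' hxe⟩

lemma IntActive.exists_gt_of_spanning (he : IntActive M B e) (hS : M.Spanning S) (heS : e ∉ S) :
    ∃ x ∈ S \ B, e < x := by
  obtain ⟨-, D, hD, hDB, -, hmin⟩ := he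
  obtain ⟨x, hxD, hxS⟩ := not_subset.1 fun hDS => hD.1.not_indep (hS.compl_coindep.subset hDS)
  have hxE : x ∈ M.E := hD.1.subset_ground hxD
  have hxe : x ≠ e := fun h => hxS ⟨hxE, h ▸ heS⟩
  obtain ⟨-, hxB⟩ := (hDB hxD).resolve_right hxe
  exact ⟨x, ⟨by_contra fun h => hxS ⟨hxE, h⟩, hxB⟩, (hmin x hxD).lt_of_ne' hxe⟩

lemma exists_gt_of_mem_sdiff (hB₁ : M.IsBase B₁) (hB₂ : M.IsBase B₂)
    (h₁ : B₁ \ IntSet M B₁ ⊆ A) (h₂ : A ⊆ B₂ ∪ ExtSet M B₂) (he : e ∈ B₁ \ B₂) :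
    ∃ x ∈ B₂ \ B₁, e < x := by
  by_cases heA : e ∈ A
  · exact ExtActive.exists_gt_of_indep ((h₂ heA).resolve_left he.2) hB₁.indep he.1
  · exact IntActive.exists_gt_of_spanning (by_contra fun h => heA (h₁ ⟨he.1, h⟩))
      hB₂.spanning he.2

theorem isBase_eq_of_subset_of_subset [M.RankFinite] (hB₁ : M.IsBase B₁) (hB₂ : M.IsBase B₂)
    (h₁l : B₁ \ IntSet M B₁ ⊆ A) (h₁u : A ⊆ B₁ ∪ ExtSet M B₁)
    (h₂l : B₂ \ IntSet M B₂ ⊆ A) (h₂u : A ⊆ B₂ ∪ ExtSet M B₂) : B₁ = B₂ := by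
  by_contra hne
  set Δ := B₁ \ B₂ ∪ B₂ \ B₁
  have hΔ : Δ.Finite :=
    (hB₁.finite.union hB₂.finite).subset (union_subset_union sdiff_subset sdiff_subset)
  have hΔne : Δ.Nonempty := by
    rw [nonempty_iff_ne_empty]
    intro h
    rw [union_empty_iff, sdiff_eq_empty, sdiff_eq_empty] at h
    exact hne (h.1.antisymm h.2)
  obtain ⟨e, heΔ, hmax⟩ := exists_max_image Δ id hΔ hΔne
  obtain ⟨x, hx, hex⟩ : ∃ x ∈ Δ, e < x := by
    rcases heΔ with he | he
    · obtain ⟨x, hx, hex⟩ := exists_gt_of_mem_sdiff hB₁ hB₂ h₁l h₂u he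
      exact ⟨x, .inr hx, hex⟩
    · obtain ⟨x, hx, hex⟩ := exists_gt_of_mem_sdiff hB₂ hB₁ h₂l h₁u he
      exact ⟨x, .inl hx, hex⟩
  exact (hmax x hx).not_gt hex

end AB

open Finset

theorem Finset.sum_Icc_sdiff_union_eq_add_pow_mul_add_pow {ι R : Type*} [DecidableEq ι]
    [CommSemiring R] {B I X : Finset ι} (hI : I ⊆ B) (hX : Disjoint B X) (x u y v : R) :
    ∑ A ∈ Icc (B \ I) (B ∪ X), x ^ #(I ∩ A) * u ^ #(I \ A) * y ^ #(X \ A) * v ^ #(X ∩ A)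
      = (x + u) ^ #I * (y + v) ^ #X := by
  rw [← sum_pow_mul_eq_add_pow, add_comm y, ← sum_pow_mul_eq_add_pow, sum_mul_sum,
    ← sum_product']
  have hXB : ∀ a ∈ X, a ∉ B := fun a ha haB => disjoint_left.1 hX haB ha
  refine sum_nbij' (fun A => (I ∩ A, X ∩ A)) (fun p => B \ I ∪ p.1 ∪ p.2) ?_ ?_ ?_ ?_ ?_
  · intro A _
    simp only [mem_product, mem_powerset]
    exact ⟨inter_subset_left, inter_subset_left⟩
  · rintro ⟨S, T⟩ hST
    simp only [mem_product, mem_powerset] at hST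
    simp only [mem_Icc]
    grind
  · intro A hA
    simp only [mem_Icc] at hA
    grind
  · rintro ⟨S, T⟩ hST
    simp only [mem_product, mem_powerset] at hST
    ext a <;> grind
  · intro A _
    rw [card_sdiff, card_sdiff, inter_comm A, inter_comm A]
    ring

open MvPolynomial in
/-- Variables: `X 0 = x`, `X 1 = u`, `X 2 = y`, `X 3 = v`. -/
theorem stmt_7_general {α : Type*} [Fintype α] [LinearOrder α] (M : Matroid α)
    (b : Finset α → Set α)
    (hb : ∀ A : Finset α, M.IsBase (b A) ∧
      b A \ AB.IntSet M (b A) ⊆ ↑A ∧ ↑A ⊆ b A ∪ AB.ExtSet M (b A)) :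
    (∑ B ∈ Finset.univ.powerset.filter (fun B : Finset α => M.IsBase ↑B),
        (X 0 + X 1 : MvPolynomial (Fin 4) ℤ) ^ (AB.IntSet M ↑B).ncard *
          (X 2 + X 3) ^ (AB.ExtSet M ↑B).ncard)
      =
    ∑ A ∈ (Finset.univ : Finset α).powerset,
        (X 0 : MvPolynomial (Fin 4) ℤ) ^ (AB.IntSet M (b A) ∩ ↑A).ncard *
          X 1 ^ (AB.IntSet M (b A) \ ↑A).ncard *
          X 2 ^ (AB.ExtSet M (b A) \ ↑A).ncard *
          X 3 ^ (AB.ExtSet M (b A) ∩ ↑A).ncard := by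
  have hbase : ∀ A ∈ univ.powerset,
      (b A).toFinset ∈ univ.powerset.filter (fun B : Finset α => M.IsBase ↑B) := by
    intro A _
    simpa using (hb A).1
  rw [← sum_fiberwise_of_maps_to hbase]
  refine sum_congr rfl fun B hB => ?_
  replace hB : M.IsBase ↑B := (mem_filter.1 hB).2
  set I := (AB.IntSet M ↑B).toFinset
  set E := (AB.ExtSet M ↑B).toFinset
  have hfiber : ∀ A, b A = ↑B ↔ A ∈ Icc (B \ I) (B ∪ E) := by
    intro A
    obtain ⟨hbA, hl, hu⟩ := hb A
    rw [mem_Icc, ← coe_subset, ← coe_subset]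
    simp only [coe_sdiff, coe_union, I, E, Set.coe_toFinset]
    exact ⟨fun h => h ▸ ⟨hl, hu⟩, fun h => AB.isBase_eq_of_subset_of_subset hbA hB hl hu h.1 h.2⟩
  have hfib : {A ∈ (univ : Finset α).powerset | (b A).toFinset = B} = Icc (B \ I) (B ∪ E) := by
    ext A
    simp [← hfiber, ← coe_inj]
  have hIB : I ⊆ B := by simpa [I] using AB.intSet_subset M ↑B
  have hBE : Disjoint B E := disjoint_coe.1 (by simpa [E] using AB.disjoint_extSet M ↑B)
  rw [hfib, Set.ncard_eq_toFinset_card', Set.ncard_eq_toFinset_card',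
    ← sum_Icc_sdiff_union_eq_add_pow_mul_add_pow hIB hBE]
  refine sum_congr rfl fun A hA => ?_
  rw [(hfiber A).2 hA, ← Set.coe_toFinset (AB.IntSet M ↑B), ← Set.coe_toFinset (AB.ExtSet M ↑B)]
  simp only [← coe_inter, ← coe_sdiff, Set.ncard_coe_finset, I, E]

open MvPolynomial in
/-- In `ℤ[x,u,y,v]` (variables `X 0 = x`, `X 1 = u`, `X 2 = y`, `X 3 = v`):
`t(M; x+u, y+v) = Σ_{A ⊆ E} x^|Int_M(A)| u^|P_M(A)| y^|Ext_M(A)| v^|Q_M(A)|`,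
where `t` is the Tutte polynomial expressed via basis activities (Crapo's theorem),
and for each subset `A`, `b A` is the unique basis with `b A \ Int(b A) ⊆ A ⊆ b A ∪ Ext(b A)`,
and `Int_M(A) = Int(B) ∩ A`, `P_M(A) = Int(B) \ A`, `Ext_M(A) = Ext(B) \ A`,
`Q_M(A) = Ext(B) ∩ A` for `B = b A`. -/
theorem stmt_7 {α : Type*} [Fintype α] [LinearOrder α] (M : Matroid α)
    (hE : M.E = Set.univ)
    (b : Finset α → Set α)
    (hb : ∀ A : Finset α, M.IsBase (b A) ∧
      b A \ AB.IntSet M (b A) ⊆ ↑A ∧ ↑A ⊆ b A ∪ AB.ExtSet M (b A)) :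
    (∑ B ∈ Finset.univ.powerset.filter (fun B : Finset α => M.IsBase ↑B),
        (X 0 + X 1 : MvPolynomial (Fin 4) ℤ) ^ (AB.IntSet M ↑B).ncard *
          (X 2 + X 3) ^ (AB.ExtSet M ↑B).ncard)
      =
    ∑ A ∈ (Finset.univ : Finset α).powerset,
        (X 0 : MvPolynomial (Fin 4) ℤ) ^ (AB.IntSet M (b A) ∩ ↑A).ncard *
          X 1 ^ (AB.IntSet M (b A) \ ↑A).ncard *
          X 2 ^ (AB.ExtSet M (b A) \ ↑A).ncard *
          X 3 ^ (AB.ExtSet M (b A) ∩ ↑A).ncard :=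
  stmt_7_general M b hb
end

section
/- Let G be a finite directed graph whose edge set E is linearly ordered, and suppose G is acyclic. Let ι = |O*(G)| be the number of edges e that are the minimum edge of some directed cocycle of G. Then the 2^ι orientations obtained from G by reversing, for any subset S of the parts of the active partition of G, all edges in those parts, are all acyclic and have the same set of dual-active edges O*(G). -/
namespace AB

variable {V E : Type*}

/-- `C` is (the edge set of) a directed cycle of the directed multigraph with edge-source
map `src` and edge-target map `tgt`: a nonempty cyclic sequence of distinct edges, each one
starting where the previous one ends. -/
def IsDirCycle (src tgt : E → V) (C : Set E) : Prop :=
  ∃ n : ℕ, ∃ hn : 0 < n, ∃ f : Fin n → E, Function.Injective f ∧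
    (∀ i : Fin n, tgt (f i) = src (f ⟨(i.1 + 1) % n, Nat.mod_lt _ hn⟩)) ∧
    C = Set.range f

/-- The graph is acyclic: it has no directed cycle. -/
def Acyclic (src tgt : E → V) : Prop := ¬ ∃ C, IsDirCycle src tgt C

/-- The directed cut determined by a vertex set `S`: all edges leaving `S`. -/
def dirCutOf (src tgt : E → V) (S : Set V) : Set E :=
  {e | src e ∈ S ∧ tgt e ∉ S}

/-- `D` is a directed cut: a nonempty set of edges all leaving some vertex set `S` which
no edge enters. -/
def IsDirCut (src tgt : E → V) (D : Set E) : Prop :=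
  ∃ S : Set V, D = dirCutOf src tgt S ∧ dirCutOf tgt src S = ∅ ∧ D.Nonempty

/-- `D` is a directed cocycle (directed bond): a minimal directed cut. -/
def IsDirCocycle (src tgt : E → V) (D : Set E) : Prop :=
  IsDirCut src tgt D ∧ ∀ D', IsDirCut src tgt D' → D' ⊆ D → D' = D

end AB

attribute [local instance] Classical.propDecidable

namespace AB

/-- The set `O*(G)` of dual-active edges: minima of directed cocycles. -/
def dualActive {V E : Type*} [LinearOrder E] (src tgt : E → V) : Set E :=
  {a | ∃ D, IsDirCocycle src tgt D ∧ IsLeast D a}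

/-- The part of the active partition associated with a dual-active edge `a`:
the union of the directed cocycles with minimum `a`, minus the union of the directed
cocycles with minimum greater than `a`. -/
def activePart {V E : Type*} [LinearOrder E] (src tgt : E → V) (a : E) : Set E :=
  {e | ∃ D, IsDirCocycle src tgt D ∧ IsLeast D a ∧ e ∈ D} \
    {e | ∃ D m, IsDirCocycle src tgt D ∧ IsLeast D m ∧ a < m ∧ e ∈ D}

/-- The orientation obtained by reversing the edges in `A`. -/
noncomputable def reorientSrc {V E : Type*} (src tgt : E → V) (A : Set E) : E → V :=
  fun e => if e ∈ A then tgt e else src e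

end AB

/-!
Write `cutUnion G U` for the union of the directed cuts of `G` contained in `U`. Every edge of a
directed cut lies in a directed cocycle inside it, so the dual-active edges are the `a` with
`a ∈ cutUnion G (Ici a)` and the active part of `a` is
`cutUnion G (Ici a) \ cutUnion G (Ioi a)`. It therefore suffices to show that reorienting a union
`A` of active parts keeps `G` acyclic and leaves `cutUnion G U` unchanged for every upper set `U`.

This goes by induction on the number of edges. Let `a` be the least edge and `H` the union of the
directed cuts avoiding `a`. If the part of `a` is not reoriented, then `A ⊆ H`. The directed cuts
avoiding `a` are exactly those of `G / Hᶜ`, whose active parts are the traces of those of `G`, so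
induction applies to `G / Hᶜ`. The edges outside `H` are those that close a directed cycle once
`a` is reversed, and these cycles show that reorienting `A` creates no new cut avoiding `a`. If
the part of `a` is reoriented, reorient the complementary union of parts instead and then reverse
every edge, which changes no directed cut.
-/

namespace AB

variable {V E : Type*} {src tgt : E → V}

def IsPredClosed (src tgt : E → V) (S : Set V) : Prop := ∀ e, tgt e ∈ S → src e ∈ S

theorem dirCutOf_swap_eq_empty_iff {S : Set V} :
    dirCutOf tgt src S = ∅ ↔ IsPredClosed src tgt S := by
  simp only [Set.eq_empty_iff_forall_notMem, dirCutOf, Set.mem_ofPred_eq, not_and, not_not,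
    IsPredClosed]

theorem isDirCut_iff {D : Set E} :
    IsDirCut src tgt D ↔ ∃ S, IsPredClosed src tgt S ∧ D = dirCutOf src tgt S ∧ D.Nonempty := by
  simp only [IsDirCut, dirCutOf_swap_eq_empty_iff, and_left_comm]

theorem IsDirCut.nonempty {D : Set E} (hD : IsDirCut src tgt D) : D.Nonempty :=
  (isDirCut_iff.mp hD).choose_spec.2.2

theorem isDirCut_dirCutOf {S : Set V} (hS : IsPredClosed src tgt S) {e : E}
    (he : e ∈ dirCutOf src tgt S) : IsDirCut src tgt (dirCutOf src tgt S) :=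
  isDirCut_iff.mpr ⟨S, hS, rfl, e, he⟩

def cutUnion (src tgt : E → V) (U : Set E) : Set E :=
  {e | ∃ D, IsDirCut src tgt D ∧ e ∈ D ∧ D ⊆ U}

theorem cutUnion_mono {U U' : Set E} (h : U ⊆ U') : cutUnion src tgt U ⊆ cutUnion src tgt U' :=
  fun _ ⟨D, hD, he, hU⟩ => ⟨D, hD, he, hU.trans h⟩

theorem cutUnion_subset (U : Set E) : cutUnion src tgt U ⊆ U :=
  fun _ ⟨_, _, he, hU⟩ => hU he

theorem subset_cutUnion_cutUnion (U : Set E) :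
    cutUnion src tgt U ⊆ cutUnion src tgt (cutUnion src tgt U) :=
  fun _ ⟨D, hD, he, hU⟩ => ⟨D, hD, he, fun _ hd => ⟨D, hD, hd, hU⟩⟩

def Arc (src tgt : E → V) (u v : V) : Prop := ∃ e, src e = u ∧ tgt e = v

def NoClosedWalk (src tgt : E → V) : Prop :=
  ∀ e, ¬ Relation.ReflTransGen (Arc src tgt) (tgt e) (src e)

theorem IsPredClosed.mem_of_reflTransGen {S : Set V} (hS : IsPredClosed src tgt S) {u v : V}
    (h : Relation.ReflTransGen (Arc src tgt) u v) (hv : v ∈ S) : u ∈ S := by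
  induction h using Relation.ReflTransGen.head_induction_on with
  | refl => exact hv
  | head huw _ ih => obtain ⟨e, rfl, rfl⟩ := huw; exact hS e ih

theorem exists_crossing_of_reflTransGen {r : V → V → Prop} {S : Set V} {u v : V}
    (h : Relation.ReflTransGen r u v) (hu : u ∉ S) (hv : v ∈ S) :
    ∃ x y, r x y ∧ x ∉ S ∧ y ∈ S ∧ Relation.ReflTransGen r u x ∧ Relation.ReflTransGen r y v := by
  induction h with
  | refl => exact absurd hv hu
  | @tail x y hux hxy ih =>
    by_cases hx : x ∈ S
    · obtain ⟨x', y', h, hx', hy', h₁, h₂⟩ := ih hx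
      exact ⟨x', y', h, hx', hy', h₁, h₂.tail hxy⟩
    · exact ⟨x, y, hxy, hx, hv, hux, .refl⟩

/-- The predecessors of `src e` form a closed set that `e` leaves. -/
theorem mem_cutUnion_univ (hG : NoClosedWalk src tgt) (e : E) : e ∈ cutUnion src tgt Set.univ := by
  set S : Set V := {v | Relation.ReflTransGen (Arc src tgt) v (src e)}
  have hS : IsPredClosed src tgt S := fun g hg => Relation.ReflTransGen.head ⟨g, rfl, rfl⟩ hg
  have he : e ∈ dirCutOf src tgt S := ⟨.refl, hG e⟩
  exact ⟨_, isDirCut_dirCutOf hS he, he, Set.subset_univ _⟩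

/-- With `S'`, `S''` the closed sets of `D' ⊇ D''`, the edges of `D' \ D''` leave
`S' \ S''` or `S' ∪ S''ᶜ`, and both cuts avoid `D''`. -/
theorem exists_isDirCut_mem_subset_diff {D' D'' : Set E} (hD' : IsDirCut src tgt D')
    (hD'' : IsDirCut src tgt D'') (hsub : D'' ⊆ D') {e : E} (he : e ∈ D' \ D'') :
    ∃ D, IsDirCut src tgt D ∧ e ∈ D ∧ D ⊆ D' \ D'' := by
  obtain ⟨S', hS', rfl, -⟩ := isDirCut_iff.mp hD'
  obtain ⟨S'', hS'', rfl, -⟩ := isDirCut_iff.mp hD''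
  obtain ⟨⟨hse, hte⟩, he''⟩ := he
  by_cases hse'' : src e ∈ S''
  · have hte'' : tgt e ∈ S'' := by_contra fun h => he'' ⟨hse'', h⟩
    have hT : IsPredClosed src tgt (S' ∪ S''ᶜ) := by
      rintro g (hg | hg)
      · exact .inl (hS' g hg)
      · by_cases hsg : src g ∈ S''
        · exact .inl (hsub ⟨hsg, hg⟩).1
        · exact .inr hsg
    have heT : e ∈ dirCutOf src tgt (S' ∪ S''ᶜ) := ⟨.inl hse, by simp [hte, hte'']⟩
    refine ⟨_, isDirCut_dirCutOf hT heT, heT, ?_⟩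
    rintro g ⟨hsg, htg⟩
    simp only [Set.mem_union, Set.mem_compl_iff, not_or, not_not] at htg
    rcases hsg with hsg | hsg
    · exact ⟨⟨hsg, htg.1⟩, fun h => h.2 htg.2⟩
    · exact absurd (hS'' g htg.2) hsg
  · have hT : IsPredClosed src tgt (S' \ S'') := by
      rintro g ⟨hg', hg''⟩
      refine ⟨hS' g hg', fun hsg => ?_⟩
      exact (hsub ⟨hsg, hg''⟩).2 hg'
    have heT : e ∈ dirCutOf src tgt (S' \ S'') := ⟨⟨hse, hse''⟩, fun h => hte h.1⟩
    refine ⟨_, isDirCut_dirCutOf hT heT, heT, ?_⟩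
    rintro g ⟨⟨hsg', hsg''⟩, htg⟩
    have htg' : tgt g ∉ S' := fun h => htg ⟨h, fun h'' => hsg'' (hS'' g h'')⟩
    exact ⟨⟨hsg', htg'⟩, fun h => hsg'' h.1⟩

/-- An inclusion-minimal directed cut through `e` inside `D` is a cocycle: a smaller directed
cut not through `e` would leave a still smaller one through `e` in the difference. -/
theorem exists_isDirCocycle_mem_subset [Finite E] {D : Set E} (hD : IsDirCut src tgt D) {e : E}
    (he : e ∈ D) : ∃ D', IsDirCocycle src tgt D' ∧ e ∈ D' ∧ D' ⊆ D := by
  obtain ⟨D', -, ⟨hD', heD', hD'D⟩, hmin⟩ := Set.Finite.exists_le_minimal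
    (s := {D' | IsDirCut src tgt D' ∧ e ∈ D' ∧ D' ⊆ D}) (Set.toFinite _) ⟨hD, he, le_rfl⟩
  refine ⟨D', ⟨hD', fun D'' hD'' hsub => ?_⟩, heD', hD'D⟩
  by_contra hne
  have hssub : D'' ⊂ D' := hsub.ssubset_of_ne hne
  by_cases he'' : e ∈ D''
  · exact hssub.2 (hmin ⟨hD'', he'', hsub.trans hD'D⟩ hsub)
  · obtain ⟨D₀, hD₀, heD₀, hD₀sub⟩ :=
      exists_isDirCut_mem_subset_diff hD' hD'' hsub ⟨heD', he''⟩
    obtain ⟨d, hd⟩ := hD''.nonempty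
    have hD₀D' : D₀ ⊆ D' := hD₀sub.trans Set.sdiff_subset
    exact (hD₀sub (hmin ⟨hD₀, heD₀, hD₀D'.trans hD'D⟩ hD₀D' (hsub hd))).2 hd

theorem mem_cutUnion_iff_exists_isDirCocycle [Finite E] {U : Set E} {e : E} :
    e ∈ cutUnion src tgt U ↔ ∃ D, IsDirCocycle src tgt D ∧ e ∈ D ∧ D ⊆ U := by
  constructor
  · rintro ⟨D, hD, heD, hDU⟩
    obtain ⟨D', hD', heD', hD'D⟩ := exists_isDirCocycle_mem_subset hD heD
    exact ⟨D', hD', heD', hD'D.trans hDU⟩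
  · rintro ⟨D, hD, heD, hDU⟩
    exact ⟨D, hD.1, heD, hDU⟩

section ActivePartition

variable [LinearOrder E]

def cutActive (src tgt : E → V) : Set E := {a | a ∈ cutUnion src tgt (Set.Ici a)}

def cutPart (src tgt : E → V) (a : E) : Set E :=
  cutUnion src tgt (Set.Ici a) \ cutUnion src tgt (Set.Ioi a)

def cutPartUnion (src tgt : E → V) (S : Set E) : Set E := ⋃ a ∈ S, cutPart src tgt a

theorem mem_cutPartUnion {S : Set E} {e : E} :
    e ∈ cutPartUnion src tgt S ↔ ∃ a ∈ S, e ∈ cutPart src tgt a := by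
  simp [cutPartUnion]

theorem IsDirCut.exists_isLeast [Finite E] {D : Set E} (hD : IsDirCut src tgt D) :
    ∃ m, IsLeast D m := by
  obtain ⟨m, hm⟩ := (Set.toFinite D).exists_minimal hD.nonempty
  exact ⟨m, minimal_iff_isLeast.mp hm⟩

theorem dualActive_eq_cutActive [Finite E] : dualActive src tgt = cutActive src tgt := by
  ext a
  constructor
  · rintro ⟨D, hD, haD, hDa⟩
    exact ⟨D, hD.1, haD, hDa⟩
  · intro ha
    obtain ⟨D, hD, haD, hDa⟩ := mem_cutUnion_iff_exists_isDirCocycle.mp ha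
    exact ⟨D, hD, haD, hDa⟩

theorem activePart_eq_cutPart [Finite E] (a : E) : activePart src tgt a = cutPart src tgt a := by
  have hgt : {e | ∃ D m, IsDirCocycle src tgt D ∧ IsLeast D m ∧ a < m ∧ e ∈ D}
      = cutUnion src tgt (Set.Ioi a) := by
    ext e
    rw [Set.mem_ofPred_eq, mem_cutUnion_iff_exists_isDirCocycle]
    constructor
    · rintro ⟨D, m, hD, hm, ham, heD⟩
      exact ⟨D, hD, heD, fun x hx => ham.trans_le (hm.2 hx)⟩
    · rintro ⟨D, hD, heD, hDa⟩
      obtain ⟨m, hm⟩ := hD.1.exists_isLeast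
      exact ⟨D, m, hD, hm, hDa hm.1, heD⟩
  have hge : {e | ∃ D, IsDirCocycle src tgt D ∧ IsLeast D a ∧ e ∈ D}
      ∪ cutUnion src tgt (Set.Ioi a) = cutUnion src tgt (Set.Ici a) := by
    refine (Set.union_subset ?_ (cutUnion_mono Set.Ioi_subset_Ici_self)).antisymm fun e he => ?_
    · rintro e ⟨D, hD, ha, heD⟩
      exact ⟨D, hD.1, heD, ha.2⟩
    obtain ⟨D, hD, heD, hDa⟩ := mem_cutUnion_iff_exists_isDirCocycle.mp he
    obtain ⟨m, hm⟩ := hD.1.exists_isLeast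
    rcases (hDa hm.1 : a ≤ m).eq_or_lt with rfl | ham
    · exact .inl ⟨D, hD, hm, heD⟩
    · exact .inr ⟨D, hD.1, heD, fun x hx => ham.trans_le (hm.2 hx)⟩
  rw [activePart, hgt, cutPart, ← hge, Set.union_sdiff_right]

theorem cutPart_disjoint {a b : E} (hab : a ≠ b) :
    Disjoint (cutPart src tgt a) (cutPart src tgt b) := by
  wlog h : a < b generalizing a b
  · exact (this hab.symm ((Ne.symm hab).lt_of_le (not_lt.mp h))).symm
  exact Set.disjoint_left.mpr fun e ha hb =>
    ha.2 (cutUnion_mono (fun x (hx : b ≤ x) => h.trans_le hx) hb.1)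

/-- `e` lies in the part of the largest `b` with `e ∈ cutUnion (Ici b)`. -/
theorem exists_mem_cutPart [Finite E] (hG : NoClosedWalk src tgt) (e : E) :
    ∃ a ∈ cutActive src tgt, e ∈ cutPart src tgt a := by
  set B : Set E := {b | e ∈ cutUnion src tgt (Set.Ici b)}
  have hmin_mem : ∀ {D m}, IsDirCut src tgt D → IsLeast D m → e ∈ D → m ∈ B :=
    fun hD hm heD => ⟨_, hD, heD, hm.2⟩
  have hB : B.Nonempty := by
    obtain ⟨D, hD, heD, -⟩ := mem_cutUnion_univ hG e
    obtain ⟨m, hm⟩ := hD.exists_isLeast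
    exact ⟨m, hmin_mem hD hm heD⟩
  obtain ⟨b, ⟨D, hD, heD, hDb⟩, hbmax⟩ := Set.exists_max_image B id (Set.toFinite B) hB
  obtain ⟨m, hm⟩ := hD.exists_isLeast
  have hmb : m = b := le_antisymm (hbmax m (hmin_mem hD hm heD)) (hDb hm.1)
  refine ⟨b, ⟨D, hD, hmb ▸ hm.1, hDb⟩, ⟨D, hD, heD, hDb⟩, ?_⟩
  rintro ⟨D', hD', heD', hD'b⟩
  obtain ⟨m', hm'⟩ := hD'.exists_isLeast
  exact (hD'b hm'.1).not_ge (hbmax m' (hmin_mem hD' hm' heD'))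

theorem cutPartUnion_diff_eq_compl [Finite E] (hG : NoClosedWalk src tgt) (S : Set E) :
    cutPartUnion src tgt (cutActive src tgt \ S) = (cutPartUnion src tgt S)ᶜ := by
  ext e
  simp only [mem_cutPartUnion, Set.mem_compl_iff, not_exists, not_and]
  constructor
  · rintro ⟨a, ⟨-, haS⟩, hea⟩ b hbS heb
    exact Set.disjoint_left.mp (cutPart_disjoint (ne_of_mem_of_not_mem hbS haS).symm) hea heb
  · intro h
    obtain ⟨a, ha, hea⟩ := exists_mem_cutPart hG e
    exact ⟨a, ⟨ha, fun haS => h a haS hea⟩, hea⟩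

end ActivePartition

section Walks

inductive IsWalk (src tgt : E → V) : V → List E → V → Prop
  | nil (v : V) : IsWalk src tgt v [] v
  | cons (e : E) {l : List E} {v : V} :
      IsWalk src tgt (tgt e) l v → IsWalk src tgt (src e) (e :: l) v

theorem exists_isWalk_of_reflTransGen {u v : V} (h : Relation.ReflTransGen (Arc src tgt) u v) :
    ∃ l, IsWalk src tgt u l v := by
  induction h using Relation.ReflTransGen.head_induction_on with
  | refl => exact ⟨[], .nil v⟩
  | head huw _ ih =>
    obtain ⟨e, rfl, rfl⟩ := huw
    obtain ⟨l, hl⟩ := ih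
    exact ⟨e :: l, .cons e hl⟩

theorem isWalk_append {p q : List E} {u v : V} :
    IsWalk src tgt u (p ++ q) v ↔ ∃ w, IsWalk src tgt u p w ∧ IsWalk src tgt w q v := by
  induction p generalizing u with
  | nil => exact ⟨fun h => ⟨u, .nil u, h⟩, fun ⟨w, hw, h⟩ => by cases hw; exact h⟩
  | cons e p ih =>
    constructor
    · rintro (_ | ⟨_, h⟩)
      obtain ⟨w, h₁, h₂⟩ := ih.mp h
      exact ⟨w, .cons e h₁, h₂⟩
    · rintro ⟨w, _ | ⟨_, h₁⟩, h₂⟩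
      exact .cons e (ih.mpr ⟨w, h₁, h₂⟩)

theorem IsWalk.src_getElem_zero {l : List E} {u v : V} (h : IsWalk src tgt u l v)
    (hl : 0 < l.length) : src l[0] = u := by
  cases h with
  | nil => simp at hl
  | cons => rfl

theorem IsWalk.eq_of_nil {u v : V} (h : IsWalk src tgt u [] v) : u = v := by
  cases h; rfl

theorem IsWalk.tgt_getElem {l : List E} {u v : V} (h : IsWalk src tgt u l v) (i : ℕ)
    (hi : i < l.length) : tgt l[i] = if hi' : i + 1 < l.length then src l[i + 1] else v := by
  induction h generalizing i with
  | nil => simp at hi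
  | @cons e l v h ih =>
    cases i with
    | zero =>
      rcases l with _ | ⟨f, l⟩
      · simpa using h.eq_of_nil
      · simpa using (h.src_getElem_zero (Nat.succ_pos _)).symm
    | succ j => simpa using ih j (by simpa using hi)

theorem exists_split_of_not_nodup {l : List E} (h : ¬ l.Nodup) :
    ∃ x l₁ l₂ l₃, l = l₁ ++ x :: l₂ ++ x :: l₃ := by
  induction l with
  | nil => simp at h
  | cons a t ih =>
    by_cases hat : a ∈ t
    · obtain ⟨s, r, rfl⟩ := List.append_of_mem hat
      exact ⟨a, [], s, r, rfl⟩
    · obtain ⟨x, l₁, l₂, l₃, rfl⟩ := ih fun hn => h (List.nodup_cons.mpr ⟨hat, hn⟩)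
      exact ⟨x, a :: l₁, l₂, l₃, rfl⟩

theorem isDirCycle_of_isWalk_of_nodup {l : List E} {u : V} (h : IsWalk src tgt u l u)
    (hl : 0 < l.length) (hnd : l.Nodup) : IsDirCycle src tgt (Set.range l.get) := by
  refine ⟨l.length, hl, l.get, List.nodup_iff_injective_get.mp hnd, fun i => ?_, rfl⟩
  simp only [List.get_eq_getElem, h.tgt_getElem i i.2]
  split_ifs with hi
  · simp [Nat.mod_eq_of_lt hi]
  · simp [show i.1 + 1 = l.length by omega, h.src_getElem_zero hl]

/-- A shortest closed walk repeats no edge, since between two occurrences of an edge there is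
a shorter closed walk. -/
theorem exists_isDirCycle_of_isWalk {l : List E} {u : V} (h : IsWalk src tgt u l u)
    (hl : l ≠ []) : ∃ C, IsDirCycle src tgt C := by
  induction hn : l.length using Nat.strong_induction_on generalizing u l with
  | _ n ih =>
  by_cases hnd : l.Nodup
  · exact ⟨_, isDirCycle_of_isWalk_of_nodup h (List.length_pos_iff.mpr hl) hnd⟩
  obtain ⟨x, l₁, l₂, l₃, rfl⟩ := exists_split_of_not_nodup hnd
  obtain ⟨w, hw, hxw⟩ := isWalk_append.mp h
  obtain ⟨w', -, hx⟩ := isWalk_append.mp hw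
  cases hxw
  cases hx with
  | cons _ hx => exact ih _ (by simp [← hn]; omega) (.cons x hx) (List.cons_ne_nil _ _) rfl

end Walks

theorem acyclic_iff_noClosedWalk : Acyclic src tgt ↔ NoClosedWalk src tgt := by
  constructor
  · intro hG e he
    obtain ⟨l, hl⟩ := exists_isWalk_of_reflTransGen he
    exact hG (exists_isDirCycle_of_isWalk (.cons e hl) (List.cons_ne_nil _ _))
  · rintro hG ⟨C, n, hn, f, -, hf, -⟩
    let g : ℕ → V := fun m => src (f ⟨m % n, Nat.mod_lt _ hn⟩)
    have hstep : ∀ m, Arc src tgt (g m) (g (m + 1)) := fun m =>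
      ⟨_, rfl, by simp only [hf, g, Nat.mod_add_mod]⟩
    have hwalk : Relation.ReflTransGen (Arc src tgt) (g 1) (g n) :=
      (reflTransGen_of_succ_of_le (fun i j => Arc src tgt (g i) (g j)) (fun i _ => hstep i)
        hn).lift g fun _ _ h => h
    refine hG (f ⟨0, hn⟩) ?_
    simpa [g, hf, Nat.mod_self] using hwalk

section Contraction

variable (src tgt : E → V) (H : Set E)

/-- The vertices of `G / Hᶜ`: classes of the equivalence generated by the edges outside `H`. -/
def contractSetoid : Setoid V :=
  Relation.EqvGen.setoid fun u v => ∃ k ∉ H, src k = u ∧ tgt k = v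

def toContract (v : V) : Quotient (contractSetoid src tgt H) := Quotient.mk _ v

/-- An endpoint map `σ` of a graph on `E` that agrees with `G` outside `H`, read in `G / Hᶜ`. -/
def contractEnd (σ : E → V) (f : H) : Quotient (contractSetoid src tgt H) :=
  toContract src tgt H (σ f)

variable {src tgt H} {σ τ : E → V}

theorem toContract_eq (hσ : Set.EqOn σ src Hᶜ) (hτ : Set.EqOn τ tgt Hᶜ) {k : E} (hk : k ∉ H) :
    toContract src tgt H (σ k) = toContract src tgt H (τ k) := by
  rw [hσ hk, hτ hk]
  exact Quotient.sound (Relation.EqvGen.rel _ _ ⟨k, hk, rfl, rfl⟩)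

theorem reorientSrc_contractEnd (A : Set E) :
    reorientSrc (contractEnd src tgt H σ) (contractEnd src tgt H τ) (Subtype.val ⁻¹' A)
      = contractEnd src tgt H (reorientSrc σ τ A) := by
  funext f
  by_cases hf : f.1 ∈ A <;> simp [reorientSrc, contractEnd, hf]

theorem mem_iff_of_toContract_eq (hσ : Set.EqOn σ src Hᶜ) (hτ : Set.EqOn τ tgt Hᶜ) {S : Set V}
    (hS : IsPredClosed σ τ S) (hSH : dirCutOf σ τ S ⊆ H) {u v : V}
    (huv : toContract src tgt H u = toContract src tgt H v) : u ∈ S ↔ v ∈ S := by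
  have h : Relation.EqvGen (fun u v => ∃ k ∉ H, src k = u ∧ tgt k = v) u v := Quotient.exact huv
  clear huv
  induction h with
  | rel x y hxy =>
    obtain ⟨k, hk, rfl, rfl⟩ := hxy
    rw [← hσ hk, ← hτ hk]
    exact ⟨fun hs => by_contra fun ht => hk (hSH ⟨hs, ht⟩), hS k⟩
  | refl => exact Iff.rfl
  | symm _ _ _ ih => exact ih.symm
  | trans _ _ _ _ _ ih₁ ih₂ => exact ih₁.trans ih₂

theorem isPredClosed_image_toContract (hσ : Set.EqOn σ src Hᶜ) (hτ : Set.EqOn τ tgt Hᶜ)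
    {S : Set V} (hS : IsPredClosed σ τ S) (hSH : dirCutOf σ τ S ⊆ H) :
    IsPredClosed (contractEnd src tgt H σ) (contractEnd src tgt H τ) (toContract src tgt H '' S) ∧
      dirCutOf (contractEnd src tgt H σ) (contractEnd src tgt H τ) (toContract src tgt H '' S)
        = Subtype.val ⁻¹' dirCutOf σ τ S := by
  have hmem : ∀ v, toContract src tgt H v ∈ toContract src tgt H '' S ↔ v ∈ S := fun v =>
    ⟨fun ⟨w, hw, hwv⟩ => (mem_iff_of_toContract_eq hσ hτ hS hSH hwv).mp hw, fun h => ⟨v, h, rfl⟩⟩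
  refine ⟨fun f hf => ?_, ?_⟩
  · exact (hmem _).mpr (hS f ((hmem _).mp hf))
  · ext f
    exact and_congr (hmem _) (not_congr (hmem _))

theorem isPredClosed_preimage_toContract (hσ : Set.EqOn σ src Hᶜ) (hτ : Set.EqOn τ tgt Hᶜ)
    {T : Set (Quotient (contractSetoid src tgt H))}
    (hT : IsPredClosed (contractEnd src tgt H σ) (contractEnd src tgt H τ) T) :
    IsPredClosed σ τ (toContract src tgt H ⁻¹' T) ∧
      dirCutOf σ τ (toContract src tgt H ⁻¹' T)
        = Subtype.val '' dirCutOf (contractEnd src tgt H σ) (contractEnd src tgt H τ) T := by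
  have hcut : ∀ e ∉ H, e ∉ dirCutOf σ τ (toContract src tgt H ⁻¹' T) := fun e he h =>
    h.2 (by simpa [toContract_eq hσ hτ he] using h.1)
  refine ⟨fun e he => ?_, ?_⟩
  · by_cases heH : e ∈ H
    · exact hT ⟨e, heH⟩ he
    · simpa [toContract_eq hσ hτ heH] using he
  · ext e
    refine ⟨fun he => ?_, ?_⟩
    · exact ⟨⟨e, by_contra fun h => hcut e h he⟩, he, rfl⟩
    · rintro ⟨f, hf, rfl⟩
      exact hf

theorem cutUnion_eq_image_contract (hσ : Set.EqOn σ src Hᶜ) (hτ : Set.EqOn τ tgt Hᶜ)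
    {U : Set E} (hU : cutUnion σ τ U ⊆ H) :
    cutUnion σ τ U = Subtype.val ''
      cutUnion (contractEnd src tgt H σ) (contractEnd src tgt H τ) (Subtype.val ⁻¹' U) := by
  ext e
  constructor
  · rintro ⟨D, hD, heD, hDU⟩
    obtain ⟨S, hS, rfl, -⟩ := isDirCut_iff.mp hD
    have hSH : dirCutOf σ τ S ⊆ H := fun d hd => hU ⟨_, hD, hd, hDU⟩
    obtain ⟨hS', hcut⟩ := isPredClosed_image_toContract hσ hτ hS hSH
    have he' : (⟨e, hSH heD⟩ : H) ∈ dirCutOf (contractEnd src tgt H σ) (contractEnd src tgt H τ)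
        (toContract src tgt H '' S) := by
      rw [hcut]; exact heD
    exact ⟨_, ⟨_, isDirCut_dirCutOf hS' he', he', by rw [hcut]; exact fun f hf => hDU hf⟩, rfl⟩
  · rintro ⟨f, ⟨D, hD, hfD, hDU⟩, rfl⟩
    obtain ⟨T, hT, rfl, -⟩ := isDirCut_iff.mp hD
    obtain ⟨hT', hcut⟩ := isPredClosed_preimage_toContract hσ hτ hT
    have hf : f.1 ∈ dirCutOf σ τ (toContract src tgt H ⁻¹' T) := by
      rw [hcut]; exact ⟨f, hfD, rfl⟩
    refine ⟨_, isDirCut_dirCutOf hT' hf, hf, ?_⟩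
    rw [hcut]
    rintro _ ⟨g, hg, rfl⟩
    exact hDU hg

theorem preimage_cutUnion_contract {U : Set E} (hU : cutUnion src tgt U ⊆ H) :
    cutUnion (contractEnd src tgt H src) (contractEnd src tgt H tgt) (Subtype.val ⁻¹' U)
      = Subtype.val ⁻¹' cutUnion src tgt U := by
  rw [cutUnion_eq_image_contract (Set.eqOn_refl _ _) (Set.eqOn_refl _ _) hU,
    Set.preimage_image_eq _ Subtype.val_injective]

theorem reflTransGen_contract (hσ : Set.EqOn σ src Hᶜ) (hτ : Set.EqOn τ tgt Hᶜ) {u v : V}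
    (h : Relation.ReflTransGen (Arc σ τ) u v) :
    Relation.ReflTransGen (Arc (contractEnd src tgt H σ) (contractEnd src tgt H τ))
      (toContract src tgt H u) (toContract src tgt H v) := by
  induction h with
  | refl => exact .refl
  | tail _ hstep ih =>
    obtain ⟨g, rfl, rfl⟩ := hstep
    by_cases hg : g ∈ H
    · exact ih.tail ⟨⟨g, hg⟩, rfl, rfl⟩
    · rwa [← toContract_eq hσ hτ hg]

theorem reflTransGen_or_exists_mem (hσ : Set.EqOn σ src Hᶜ) (hτ : Set.EqOn τ tgt Hᶜ) {u v : V}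
    (h : Relation.ReflTransGen (Arc σ τ) u v) :
    Relation.ReflTransGen (Arc src tgt) u v ∨ ∃ g ∈ H,
      Relation.ReflTransGen (Arc σ τ) u (σ g) ∧ Relation.ReflTransGen (Arc σ τ) (τ g) v := by
  induction h with
  | refl => exact .inl .refl
  | @tail x y hux hstep ih =>
    obtain ⟨g, rfl, rfl⟩ := hstep
    by_cases hg : g ∈ H
    · exact .inr ⟨g, hg, hux, .refl⟩
    · rcases ih with ih | ⟨g', hg', h₁, h₂⟩
      · exact .inl (ih.tail ⟨g, (hσ hg).symm, (hτ hg).symm⟩)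
      · exact .inr ⟨g', hg', h₁, h₂.tail ⟨g, rfl, rfl⟩⟩

theorem noClosedWalk_contract (hH : H ⊆ cutUnion src tgt H) :
    NoClosedWalk (contractEnd src tgt H src) (contractEnd src tgt H tgt) := by
  intro f hf
  obtain ⟨D, hD, hfD, hDH⟩ := hH f.2
  obtain ⟨S, hS, rfl, -⟩ := isDirCut_iff.mp hD
  obtain ⟨hS', hcut⟩ :=
    isPredClosed_image_toContract (Set.eqOn_refl _ _) (Set.eqOn_refl _ _) hS hDH
  have hf' : f ∈ dirCutOf (contractEnd src tgt H src) (contractEnd src tgt H tgt)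
      (toContract src tgt H '' S) := by
    rw [hcut]; exact hfD
  exact hf'.2 (hS'.mem_of_reflTransGen hf hf'.1)

/-- A closed walk of `(σ, τ)` through an edge outside `H` either is one of `G`, or, read in
`G / Hᶜ` where that edge is contracted, closes up through an edge of `H`. -/
theorem noClosedWalk_of_contract (hσ : Set.EqOn σ src Hᶜ) (hτ : Set.EqOn τ tgt Hᶜ)
    (hG : NoClosedWalk src tgt)
    (hc : NoClosedWalk (contractEnd src tgt H σ) (contractEnd src tgt H τ)) :
    NoClosedWalk σ τ := by
  intro e he
  by_cases heH : e ∈ H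
  · exact hc ⟨e, heH⟩ (reflTransGen_contract hσ hτ he)
  rcases reflTransGen_or_exists_mem hσ hτ he with hG' | ⟨g, hg, h₁, h₂⟩
  · exact hG e (by rwa [← hσ heH, ← hτ heH])
  · refine hc ⟨g, hg⟩ ((reflTransGen_contract hσ hτ h₂).trans ?_)
    rw [toContract_eq hσ hτ heH]
    exact reflTransGen_contract hσ hτ h₁

end Contraction

section Reversal

theorem dirCutOf_swap (S : Set V) : dirCutOf tgt src S = dirCutOf src tgt Sᶜ := by
  ext e
  simp only [dirCutOf, Set.mem_ofPred_eq, Set.mem_compl_iff, not_not, and_comm]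

theorem isDirCut_swap {D : Set E} : IsDirCut tgt src D ↔ IsDirCut src tgt D := by
  have key : ∀ {src tgt : E → V}, IsDirCut tgt src D → IsDirCut src tgt D := by
    rintro src tgt ⟨S, rfl, h, hne⟩
    refine ⟨Sᶜ, dirCutOf_swap S, ?_, hne⟩
    rwa [dirCutOf_swap (src := src), compl_compl]
  exact ⟨key, key⟩

theorem cutUnion_swap (U : Set E) : cutUnion tgt src U = cutUnion src tgt U := by
  simp only [cutUnion, isDirCut_swap]

theorem cutActive_swap [LinearOrder E] : cutActive tgt src = cutActive src tgt := by
  simp only [cutActive, cutUnion_swap]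

theorem cutPartUnion_swap [LinearOrder E] (S : Set E) :
    cutPartUnion tgt src S = cutPartUnion src tgt S := by
  simp only [cutPartUnion, cutPart, cutUnion_swap]

theorem reflTransGen_arc_swap {u v : V} (h : Relation.ReflTransGen (Arc tgt src) u v) :
    Relation.ReflTransGen (Arc src tgt) v u := by
  induction h with
  | refl => exact .refl
  | tail _ hstep ih =>
    obtain ⟨e, rfl, rfl⟩ := hstep
    exact .head ⟨e, rfl, rfl⟩ ih

theorem NoClosedWalk.swap (h : NoClosedWalk src tgt) : NoClosedWalk tgt src :=
  fun e he => h e (reflTransGen_arc_swap he)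

theorem reorientSrc_compl (A : Set E) : reorientSrc tgt src Aᶜ = reorientSrc src tgt A := by
  funext e
  by_cases he : e ∈ A <;> simp [reorientSrc, he]

end Reversal

section LowestEdge

def ArcOrRev (src tgt : E → V) (a : E) (u v : V) : Prop :=
  Arc src tgt u v ∨ (tgt a = u ∧ src a = v)

/-- With `a` reversed, the predecessors of `src x` form a closed set; it contains `tgt a`
whenever it contains `src a`, so its cut avoids `a`. -/
theorem mem_cutUnion_compl_singleton_iff {a x : E} :
    x ∈ cutUnion src tgt {a}ᶜ ↔ ¬ Relation.ReflTransGen (ArcOrRev src tgt a) (tgt x) (src x) := by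
  constructor
  · rintro ⟨D, hD, hxD, hDa⟩ hw
    obtain ⟨S, hS, rfl, -⟩ := isDirCut_iff.mp hD
    obtain ⟨u, v, huv, hu, hv, -, -⟩ := exists_crossing_of_reflTransGen hw hxD.2 hxD.1
    rcases huv with ⟨g, rfl, rfl⟩ | ⟨rfl, rfl⟩
    · exact hu (hS g hv)
    · exact hDa ⟨hv, hu⟩ rfl
  · intro hw
    set S : Set V := {v | Relation.ReflTransGen (ArcOrRev src tgt a) v (src x)}
    have hS : IsPredClosed src tgt S := fun e he => .head (.inl ⟨e, rfl, rfl⟩) he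
    have hx : x ∈ dirCutOf src tgt S := ⟨.refl, hw⟩
    refine ⟨_, isDirCut_dirCutOf hS hx, hx, ?_⟩
    rintro g ⟨hg, hg'⟩ rfl
    exact hg' (.head (.inr ⟨rfl, rfl⟩) hg)

/-- An edge `k` outside `cutUnion {a}ᶜ` closes, with `a` reversed, a walk that would have to
enter the new closed set. -/
theorem cutUnion_reorientSrc_subset {a : E} {A : Set E} (hA : A ⊆ cutUnion src tgt {a}ᶜ) :
    cutUnion (reorientSrc src tgt A) (reorientSrc tgt src A) {a}ᶜ ⊆ cutUnion src tgt {a}ᶜ := by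
  have hkeep : ∀ {g}, g ∉ A → reorientSrc src tgt A g = src g ∧ reorientSrc tgt src A g = tgt g :=
    fun hg => by simp [reorientSrc, hg]
  rintro k ⟨D, hD, hkD, hDa⟩
  by_contra hk
  obtain ⟨T, hT, rfl, -⟩ := isDirCut_iff.mp hD
  have hkA : k ∉ A := fun h => hk (hA h)
  rw [mem_cutUnion_compl_singleton_iff, not_not] at hk
  obtain ⟨hks, hkt⟩ := hkD
  rw [(hkeep hkA).1] at hks
  rw [(hkeep hkA).2] at hkt
  obtain ⟨u, v, huv, hu, hv, hw₁, hw₂⟩ := exists_crossing_of_reflTransGen hk hkt hks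
  rcases huv with ⟨g, rfl, rfl⟩ | ⟨rfl, rfl⟩
  · by_cases hgA : g ∈ A
    · refine mem_cutUnion_compl_singleton_iff.mp (hA hgA) ?_
      exact (hw₂.tail (.inl ⟨k, rfl, rfl⟩)).trans hw₁
    · exact hu ((hkeep hgA).1 ▸ hT g ((hkeep hgA).2 ▸ hv))
  · have haA : a ∉ A := fun h => cutUnion_subset _ (hA h) rfl
    exact hDa ⟨(hkeep haA).1 ▸ hv, (hkeep haA).2 ▸ hu⟩ rfl

end LowestEdge

section Reorientation

variable [LinearOrder E]

def ReorientPreserves (src tgt : E → V) (A : Set E) : Prop :=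
  NoClosedWalk (reorientSrc src tgt A) (reorientSrc tgt src A) ∧
    ∀ U, IsUpperSet U →
      cutUnion (reorientSrc src tgt A) (reorientSrc tgt src A) U = cutUnion src tgt U

theorem ReorientPreserves.of_swap_compl {A : Set E} (h : ReorientPreserves tgt src Aᶜ) :
    ReorientPreserves src tgt A := by
  simpa only [ReorientPreserves, reorientSrc_compl, cutUnion_swap] using h

theorem ReorientPreserves.of_isEmpty [IsEmpty E] (A : Set E) : ReorientPreserves src tgt A :=
  ⟨fun e => isEmptyElim e, fun _ _ => Set.ext fun e => isEmptyElim e⟩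

variable {a : E}

theorem Ici_subset_compl_singleton (hbot : ∀ f, a ≤ f) {x : E} (hx : x ≠ a) :
    Set.Ici x ⊆ {a}ᶜ :=
  fun _ hy hya => hx (le_antisymm (hya ▸ hy) (hbot x))

theorem cutUnion_Ici_subset (hbot : ∀ f, a ≤ f) {x : E} (hx : x ∈ cutUnion src tgt {a}ᶜ) :
    cutUnion src tgt (Set.Ici x) ⊆ cutUnion src tgt {a}ᶜ :=
  cutUnion_mono (Ici_subset_compl_singleton hbot (cutUnion_subset _ hx))

theorem cutPartUnion_subset_cutUnion (hbot : ∀ f, a ≤ f) {S : Set E} (haS : a ∉ S) :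
    cutPartUnion src tgt S ⊆ cutUnion src tgt {a}ᶜ := by
  intro e he
  obtain ⟨s, hs, hes⟩ := mem_cutPartUnion.mp he
  exact cutUnion_mono (Ici_subset_compl_singleton hbot (ne_of_mem_of_not_mem hs haS)) hes.1

section Contraction

variable (hbot : ∀ f, a ≤ f)
include hbot

theorem cutUnion_contract_Ici (x : cutUnion src tgt {a}ᶜ) :
    cutUnion (contractEnd src tgt _ src) (contractEnd src tgt _ tgt) (Set.Ici x)
      = Subtype.val ⁻¹' cutUnion src tgt (Set.Ici x.1) := by
  rw [← preimage_cutUnion_contract (cutUnion_Ici_subset hbot x.2)]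
  rfl

theorem cutUnion_contract_Ioi (x : cutUnion src tgt {a}ᶜ) :
    cutUnion (contractEnd src tgt _ src) (contractEnd src tgt _ tgt) (Set.Ioi x)
      = Subtype.val ⁻¹' cutUnion src tgt (Set.Ioi x.1) := by
  rw [← preimage_cutUnion_contract
    ((cutUnion_mono Set.Ioi_subset_Ici_self).trans (cutUnion_Ici_subset hbot x.2))]
  rfl

theorem cutActive_contract :
    cutActive (contractEnd src tgt (cutUnion src tgt {a}ᶜ) src) (contractEnd src tgt _ tgt)
      = Subtype.val ⁻¹' cutActive src tgt := by
  ext x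
  exact Set.ext_iff.mp (cutUnion_contract_Ici hbot x) x

theorem cutPartUnion_contract {S : Set E} (hS : S ⊆ cutUnion src tgt {a}ᶜ) :
    cutPartUnion (contractEnd src tgt (cutUnion src tgt {a}ᶜ) src) (contractEnd src tgt _ tgt)
      (Subtype.val ⁻¹' S) = Subtype.val ⁻¹' cutPartUnion src tgt S := by
  have hpart : ∀ x, cutPart (contractEnd src tgt _ src) (contractEnd src tgt _ tgt) x
      = Subtype.val ⁻¹' cutPart src tgt x.1 := fun x => by
    rw [cutPart, cutPart, cutUnion_contract_Ici hbot, cutUnion_contract_Ioi hbot,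
      Set.preimage_sdiff]
  ext f
  simp only [Set.mem_preimage, mem_cutPartUnion, hpart]
  exact ⟨fun ⟨x, hx, hfx⟩ => ⟨x.1, hx, hfx⟩, fun ⟨x, hx, hfx⟩ => ⟨⟨x, hS hx⟩, hx, hfx⟩⟩

/-- With `H = cutUnion {a}ᶜ` for the least edge `a`, the directed cuts avoiding `a` are those of
`G / Hᶜ`, also after reorienting `A ⊆ H`, and an upper set containing `a` is everything. -/
theorem ReorientPreserves.of_contract (hG : NoClosedWalk src tgt) {A : Set E}
    (hA : A ⊆ cutUnion src tgt {a}ᶜ)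
    (hc : ReorientPreserves (contractEnd src tgt (cutUnion src tgt {a}ᶜ) src)
      (contractEnd src tgt _ tgt) (Subtype.val ⁻¹' A)) :
    ReorientPreserves src tgt A := by
  set H := cutUnion src tgt {a}ᶜ
  have hσ : Set.EqOn (reorientSrc src tgt A) src Hᶜ := fun g hg => by
    simp [reorientSrc, show g ∉ A from fun h => hg (hA h)]
  have hτ : Set.EqOn (reorientSrc tgt src A) tgt Hᶜ := fun g hg => by
    simp [reorientSrc, show g ∉ A from fun h => hg (hA h)]
  rw [ReorientPreserves, reorientSrc_contractEnd, reorientSrc_contractEnd] at hc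
  have hG' := noClosedWalk_of_contract hσ hτ hG hc.1
  refine ⟨hG', fun U hU => ?_⟩
  by_cases haU : a ∈ U
  · have hUuniv : U = Set.univ := Set.eq_univ_of_forall fun x => hU (hbot x) haU
    subst hUuniv
    rw [Set.eq_univ_of_forall (mem_cutUnion_univ hG'), Set.eq_univ_of_forall (mem_cutUnion_univ hG)]
  have hUa : U ⊆ {a}ᶜ := fun x hx hxa => haU (hxa ▸ hx)
  rw [cutUnion_eq_image_contract hσ hτ ((cutUnion_mono hUa).trans (cutUnion_reorientSrc_subset hA)),
    cutUnion_eq_image_contract (Set.eqOn_refl _ _) (Set.eqOn_refl _ _) (cutUnion_mono hUa),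
    hc.2 _ (hU.preimage (Subtype.mono_coe _))]

end Contraction

theorem reorientPreserves_cutPartUnion [Fintype E] (hG : NoClosedWalk src tgt) {S : Set E}
    (hS : S ⊆ cutActive src tgt) : ReorientPreserves src tgt (cutPartUnion src tgt S) := by
  induction hn : Fintype.card E using Nat.strong_induction_on generalizing V E with
  | _ n ih =>
  rcases isEmpty_or_nonempty E with hE | hE
  · exact .of_isEmpty _
  obtain ⟨a, hbot⟩ := Finite.exists_min (id : E → E)
  suffices key : ∀ {src tgt : E → V}, NoClosedWalk src tgt → ∀ {S : Set E},
      S ⊆ cutActive src tgt → a ∉ S → ReorientPreserves src tgt (cutPartUnion src tgt S) by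
    by_cases ha : a ∈ S
    · refine .of_swap_compl ?_
      rw [← cutPartUnion_diff_eq_compl hG, ← cutPartUnion_swap]
      exact key hG.swap (cutActive_swap (src := src) ▸ Set.sdiff_subset) fun h => h.2 ha
    · exact key hG hS ha
  intro src tgt hG S hS haS
  have hSH : S ⊆ cutUnion src tgt {a}ᶜ := fun s hs =>
    cutUnion_mono (Ici_subset_compl_singleton hbot (ne_of_mem_of_not_mem hs haS)) (hS hs)
  refine .of_contract hbot hG (cutPartUnion_subset_cutUnion hbot haS) ?_
  rw [← cutPartUnion_contract hbot hSH]
  refine ih _ ?_ (noClosedWalk_contract (subset_cutUnion_cutUnion _)) ?_ rfl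
  · exact hn ▸ Fintype.card_subtype_lt fun ha => cutUnion_subset _ ha rfl
  · rw [cutActive_contract hbot]
    exact Set.preimage_mono hS

end Reorientation

end AB

theorem stmt_14_general {V E : Type*} [Fintype E] [LinearOrder E]
    (src tgt : E → V) (hacyc : AB.Acyclic src tgt)
    (S : Set E) (hS : S ⊆ AB.dualActive src tgt)
    (A : Set E) (hA : A = ⋃ a ∈ S, AB.activePart src tgt a) :
    AB.Acyclic (AB.reorientSrc src tgt A) (AB.reorientSrc tgt src A) ∧
      AB.dualActive (AB.reorientSrc src tgt A) (AB.reorientSrc tgt src A)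
        = AB.dualActive src tgt := by
  have hA' : A = AB.cutPartUnion src tgt S := by
    simp only [hA, AB.cutPartUnion, AB.activePart_eq_cutPart]
  rw [AB.dualActive_eq_cutActive] at hS
  obtain ⟨hG', hcut⟩ :=
    AB.reorientPreserves_cutPartUnion (AB.acyclic_iff_noClosedWalk.mp hacyc) hS
  subst hA'
  refine ⟨AB.acyclic_iff_noClosedWalk.mpr hG', ?_⟩
  rw [AB.dualActive_eq_cutActive, AB.dualActive_eq_cutActive]
  ext a
  exact Set.ext_iff.mp (hcut (Set.Ici a) (isUpperSet_Ici a)) a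

/-- Let `G` be a finite acyclic directed graph with linearly ordered
edges. Reversing the edges of any union of parts of the active partition of `G` yields an
acyclic orientation with the same set of dual-active edges `O*(G)`; in particular all
`2^ι` such orientations (`ι = |O*(G)|`) are acyclic with dual-active set `O*(G)`. -/
theorem stmt_14 {V E : Type*} [Fintype V] [Fintype E] [LinearOrder E]
    (src tgt : E → V) (hacyc : AB.Acyclic src tgt)
    (ι : ℕ) (hι : ι = (AB.dualActive src tgt).ncard)
    (S : Set E) (hS : S ⊆ AB.dualActive src tgt)
    (A : Set E) (hA : A = ⋃ a ∈ S, AB.activePart src tgt a) :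
    AB.Acyclic (AB.reorientSrc src tgt A) (AB.reorientSrc tgt src A) ∧
      AB.dualActive (AB.reorientSrc src tgt A) (AB.reorientSrc tgt src A)
        = AB.dualActive src tgt :=
  stmt_14_general src tgt hacyc S hS A hA
end

section
/- Let M be a matroid on a finite set E with |E| > 1. Then β(M) = β(M*), where β(M) is Crapo's beta invariant. -/
namespace AB
/-- The rank of a set `X` in a matroid `M`: the largest cardinality of an
independent subset of `X`. -/
noncomputable def rank {α : Type*} (M : Matroid α) (X : Set α) : ℕ :=
  sSup {n : ℕ | ∃ I, I ⊆ X ∧ M.Indep I ∧ I.ncard = n}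

/-- Crapo's beta invariant: `β(M) = (-1)^{r(M)} Σ_{A ⊆ E} (-1)^{|A|} r(A)`. -/
noncomputable def beta {α : Type*} [Fintype α] (M : Matroid α) : ℤ :=
  (-1) ^ (rank M M.E) *
    ∑ A ∈ (Finset.univ : Finset α).powerset, (-1) ^ A.card * (rank M ↑A : ℤ)
end AB

/-! The dual rank formula `r*(A) = |A| + r(E \ A) - r(E)` rewrites the alternating rank sum of
`M✶` as the alternating sum of `r(E \ A)`, plus multiples of `∑ (-1)^|A|` and `∑ (-1)^|A| |A|`,
both of which vanish once `|E| > 1`. Reindexing by complements costs a factor `(-1)^|E|`, which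
the prefactors absorb because `r(M) + r(M✶) = |E|`. -/

open Finset

lemma neg_one_pow_mul_neg_one_pow_add {R : Type*} [Monoid R] [HasDistribNeg R] (m n : ℕ) :
    (-1 : R) ^ m * (-1) ^ (m + n) = (-1) ^ n := by
  rw [pow_add, ← mul_assoc, ← pow_add, Even.neg_one_pow ⟨m, rfl⟩, one_mul]

lemma Finset.sum_powerset_neg_one_pow_card_mul_card {α : Type*} [DecidableEq α] {s : Finset α}
    (hs : 1 < #s) : ∑ A ∈ s.powerset, (-1 : ℤ) ^ #A * #A = 0 := by
  obtain ⟨a, ha⟩ := card_pos.1 (by omega : 0 < #s)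
  have hrest : (s.erase a).Nonempty := by
    rw [← card_pos, card_erase_of_mem ha]; omega
  rw [← insert_erase ha, sum_powerset_insert (notMem_erase a s), ← sum_add_distrib,
    ← neg_eq_zero, ← sum_neg_distrib, ← sum_powerset_neg_one_pow_card_of_nonempty hrest]
  refine sum_congr rfl fun A hA => ?_
  rw [card_insert_of_notMem fun haA => notMem_erase a s (mem_powerset.1 hA haA)]
  push_cast
  ring

lemma Finset.sum_neg_one_pow_card_mul_compl {α R : Type*} [Fintype α] [DecidableEq α]
    [CommRing R] (f : Finset α → R) :
    ∑ A : Finset α, (-1 : R) ^ #A * f Aᶜ =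
      (-1) ^ Fintype.card α * ∑ A : Finset α, (-1) ^ #A * f A := by
  rw [← Fintype.sum_bijective _ compl_involutive.bijective (fun A => (-1 : R) ^ #Aᶜ * f A) _
    fun A => by rw [compl_compl], mul_sum]
  refine sum_congr rfl fun A _ => ?_
  rw [← mul_assoc, mul_comm ((-1 : R) ^ Fintype.card α), ← card_add_card_compl A,
    neg_one_pow_mul_neg_one_pow_add]

namespace AB

variable {α : Type*}

lemma cast_rank_eq_eRk [Finite α] (M : Matroid α) (X : Set α) : (rank M X : ℕ∞) = M.eRk X := by
  obtain ⟨I, hI⟩ := M.exists_isBasis' X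
  have hmax : IsGreatest {n : ℕ | ∃ J, J ⊆ X ∧ M.Indep J ∧ J.ncard = n} I.ncard := by
    refine ⟨⟨I, hI.subset, hI.indep, rfl⟩, ?_⟩
    rintro _ ⟨J, hJX, hJ, rfl⟩
    have hJI := hJ.encard_le_eRk_of_subset hJX
    rw [← hI.encard_eq_eRk, ← J.toFinite.cast_ncard_eq, ← I.toFinite.cast_ncard_eq] at hJI
    exact_mod_cast hJI
  rw [rank, hmax.csSup_eq, I.toFinite.cast_ncard_eq, hI.encard_eq_eRk]

lemma rank_dual_add_rank_ground_diff [Finite α] (M : Matroid α) {X : Set α} (hX : X ⊆ M.E) :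
    rank M✶ X + rank M M.E = rank M (M.E \ X) + X.ncard := by
  apply Nat.cast_injective (R := ℕ∞)
  push_cast
  rw [cast_rank_eq_eRk, cast_rank_eq_eRk, cast_rank_eq_eRk, X.toFinite.cast_ncard_eq,
    Matroid.eRk_ground]
  exact M.eRk_dual_add_eRank X hX

lemma rank_ground_add_rank_dual_ground [Finite α] (M : Matroid α) :
    rank M M.E + rank M✶ M✶.E = M.E.ncard := by
  apply Nat.cast_injective (R := ℕ∞)
  push_cast
  rw [cast_rank_eq_eRk, cast_rank_eq_eRk, Matroid.eRk_ground, Matroid.eRk_ground,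
    M.E.toFinite.cast_ncard_eq]
  exact M.eRank_add_eRank_dual

lemma sum_neg_one_pow_mul_rank_dual [Fintype α] {M : Matroid α} (hE : M.E = Set.univ)
    (hcard : 1 < Fintype.card α) :
    ∑ A : Finset α, (-1 : ℤ) ^ #A * rank M✶ A =
      (-1) ^ Fintype.card α * ∑ A : Finset α, (-1 : ℤ) ^ #A * rank M A := by
  classical
  have hdual (A : Finset α) : (rank M✶ A : ℤ) = #A + rank M ↑Aᶜ - rank M M.E := by
    have h := rank_dual_add_rank_ground_diff M (X := A) (hE ▸ Set.subset_univ _)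
    rw [hE, ← Set.compl_eq_univ_sdiff, ← coe_compl, Set.ncard_coe_finset] at h
    rw [hE]
    omega
  have hcardA : ∑ A : Finset α, (-1 : ℤ) ^ #A * #A = 0 := by
    rw [← powerset_univ]
    exact sum_powerset_neg_one_pow_card_mul_card hcard
  have hone : ∑ A : Finset α, (-1 : ℤ) ^ #A = 0 := by
    rw [← powerset_univ]
    exact sum_powerset_neg_one_pow_card_of_nonempty (univ_nonempty_iff.2 (by
      rw [← Fintype.card_pos_iff]; omega))
  rw [← sum_neg_one_pow_card_mul_compl (fun A : Finset α => (rank M A : ℤ))]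
  calc ∑ A : Finset α, (-1 : ℤ) ^ #A * rank M✶ A
      = ∑ A : Finset α, ((-1 : ℤ) ^ #A * #A + (-1) ^ #A * rank M ↑Aᶜ
          - rank M M.E * (-1) ^ #A) := sum_congr rfl fun A _ => by rw [hdual]; ring
    _ = ∑ A : Finset α, (-1 : ℤ) ^ #A * rank M ↑Aᶜ := by
      rw [sum_sub_distrib, sum_add_distrib, ← mul_sum, hcardA, hone]
      ring

end AB

/-- For a matroid on a finite set with more than one element,
`β(M) = β(M✶)`. -/
theorem stmt_15 {α : Type*} [Fintype α] (M : Matroid α)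
    (hE : M.E = Set.univ) (hcard : 1 < Fintype.card α) :
    AB.beta M = AB.beta M✶ := by
  have hranks := AB.rank_ground_add_rank_dual_ground M
  rw [Matroid.dual_ground, hE, Set.ncard_univ, Nat.card_eq_fintype_card, add_comm] at hranks
  rw [AB.beta, AB.beta, powerset_univ, AB.sum_neg_one_pow_mul_rank_dual hE hcard, ← hranks,
    Matroid.dual_ground, hE, ← mul_assoc, neg_one_pow_mul_neg_one_pow_add]
end
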